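/- Let ABCD be a tetrahedron of volume 1 with K on edge CD, L on edge DA, M on edge AB, N on edge BC, ratios x = |CK|/|KD|, y = |DL|/|LA|, z = |AM|/|MB|, t = |BN|/|NC|, all positive, with xyzt ≠ 1. The four planes through (A,B,K), (B,C,L), (C,D,M), (D,A,N) enclose a tetrahedron PQRS whose volume equals |1 - xyzt|^3 / ((1+x+xy+xyz)(1+y+yz+yzt)(1+z+zt+ztx)(1+t+tx+txy)). -/

import Mathlib

/-!
In barycentric coordinates `(a, b, c, d)` with respect to `ABCD`, the plane `ABK` is `d = x c`,
`BCL` is `a = y d`, `CDM` is `b = z a` and `DAN` is `c = t b`. A vertex of `PQRS` lies on three of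
these planes, so its coordinates form a chain of three ratios, normalised to sum `1`; for instance
`P` is proportional to `(1, z, z t, z t x)`. The affine map sending `A, B, C, D` to `P, Q, R, S`
scales volumes by the determinant of this matrix of barycentric coordinates, which is
`(1 - x y z t)³` divided by the four normalising sums.
-/

open MeasureTheory

noncomputable def tetVol (A B C D : EuclideanSpace ℝ (Fin 3)) : ℝ :=
  (volume (convexHull ℝ {A, B, C, D})).toReal

open Module

theorem MeasureTheory.Measure.addHaar_image_affineMap {E : Type*} [NormedAddCommGroup E]
    [NormedSpace ℝ E] [MeasurableSpace E] [BorelSpace E] [FiniteDimensional ℝ E]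
    (μ : Measure E) [μ.IsAddHaarMeasure] (f : E →ᵃ[ℝ] E) (s : Set E) :
    μ (f '' s) = ENNReal.ofReal |LinearMap.det f.linear| * μ s := by
  have : f '' s = (· + f 0) '' (f.linear '' s) := by
    rw [Set.image_image]; congr 1; funext v; exact congrFun f.decomp v
  rw [this, Set.image_add_right, measure_preimage_add_right, addHaar_image_linearMap]

theorem tetVol_map (f : EuclideanSpace ℝ (Fin 3) →ᵃ[ℝ] EuclideanSpace ℝ (Fin 3))
    (A B C D : EuclideanSpace ℝ (Fin 3)) :
    tetVol (f A) (f B) (f C) (f D) = |LinearMap.det f.linear| * tetVol A B C D := by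
  simp only [tetVol]
  rw [← Set.image_pair, ← Set.image_insert_eq, ← Set.image_insert_eq, ← f.image_convexHull,
    Measure.addHaar_image_affineMap, ENNReal.toReal_mul, ENNReal.toReal_ofReal (abs_nonneg _)]

theorem eq_lineMap_of_mem_segment_of_dist_div_dist {E : Type*} [NormedAddCommGroup E]
    [NormedSpace ℝ E] {C D K : E} {x : ℝ} (hK : K ∈ segment ℝ C D) (hx : 0 < x)
    (hxK : dist C K / dist K D = x) : K = AffineMap.lineMap C D (x / (1 + x)) := by
  rw [segment_eq_image_lineMap] at hK
  obtain ⟨r, ⟨hr0, hr1⟩, rfl⟩ := hK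
  rw [dist_left_lineMap, dist_lineMap_right, Real.norm_of_nonneg hr0,
    Real.norm_of_nonneg (sub_nonneg.2 hr1)] at hxK
  have hCD : dist C D ≠ 0 := by rintro h; simp only [h, mul_zero, div_zero] at hxK; linarith
  have hr1' : 1 - r ≠ 0 := by rintro h; simp only [h, zero_mul, div_zero] at hxK; linarith
  rw [mul_div_mul_right _ _ hCD] at hxK
  congr 1
  subst hxK
  field_simp
  ring

theorem AffineMap.apply_eq_of_mem_affineSpan {k P₁ P₂ V₁ V₂ : Type*} [Ring k] [AddCommGroup V₁]
    [Module k V₁] [AddTorsor V₁ P₁] [AddCommGroup V₂] [Module k V₂] [AddTorsor V₂ P₂]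
    (f : P₁ →ᵃ[k] P₂) {s : Set P₁} {c : P₂} (hs : ∀ p ∈ s, f p = c) {p : P₁}
    (hp : p ∈ affineSpan k s) : f p = c := by
  have : f p ∈ affineSpan k (f '' s) := by
    rw [← AffineSubspace.map_span]; exact ⟨p, hp, rfl⟩
  rw [← AffineSubspace.mem_affineSpan_singleton (k := k)]
  exact affineSpan_mono k (by rintro _ ⟨q, hq, rfl⟩; exact hs q hq) this

theorem Matrix.det_fin_four_eq_det_sub_row_zero {R : Type*} [CommRing R]
    (W : Matrix (Fin 4) (Fin 4) R) (hW : ∀ i, ∑ j, W i j = 1) :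
    W.det = (Matrix.of fun i j : Fin 3 => W j.succ i.succ - W 0 i.succ).det := by
  have h : ∀ i, W i 0 = 1 - W i 1 - W i 2 - W i 3 := fun i => by
    have := hW i; rw [Fin.sum_univ_four] at this; linear_combination this
  rw [Matrix.det_succ_row_zero, Fin.sum_univ_four]
  simp only [Matrix.det_fin_three, Matrix.submatrix_apply, Matrix.of_apply, Fin.succAbove,
    Fin.reduceSucc, Fin.reduceCastSucc, Fin.reduceLT, ↓reduceIte, Fin.coe_ofNat_eq_mod, Fin.isValue,
    h 0, h 1, h 2, h 3]
  ring

def routhMatrix {R : Type*} [CommRing R] (x y z t : R) : Matrix (Fin 4) (Fin 4) R :=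
  !![1, z, z * t, z * t * x;
     t * x * y, 1, t, t * x;
     x * y, x * y * z, 1, x;
     y, y * z, y * z * t, 1]

theorem det_routhMatrix {R : Type*} [CommRing R] (x y z t : R) :
    (routhMatrix x y z t).det = (1 - x * y * z * t) ^ 3 := by
  rw [Matrix.det_succ_row_zero, Fin.sum_univ_four]
  simp only [Matrix.det_fin_three, Matrix.submatrix_apply, routhMatrix, Matrix.of_apply,
    Fin.succAbove, Fin.reduceSucc, Fin.reduceCastSucc, Fin.reduceLT, ↓reduceIte, Matrix.cons_val,
    Fin.coe_ofNat_eq_mod, Fin.isValue]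
  ring

theorem weights_eq_of_consecutive_ratios {K : Type*} [CommRing K] {a b c d r s u w : K}
    (hsum : a + b + c + d = 1) (hb : b = r * a) (hc : c = s * b) (hd : d = u * c)
    (hw : w * (1 + r + r * s + r * s * u) = 1) :
    a = w * 1 ∧ b = w * r ∧ c = w * (r * s) ∧ d = w * (r * s * u) := by
  have haS : a * (1 + r + r * s + r * s * u) = 1 := by
    rw [hd, hc, hb] at hsum; linear_combination hsum
  have ha : a = w := by linear_combination (-a) * hw + w * haS
  refine ⟨?_, ?_, ?_, ?_⟩ <;> simp only [hd, hc, hb, ha] <;> ring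

namespace AffineBasis

variable {k V : Type*} [Field k] [AddCommGroup V] [Module k V]

theorem coord_eq_mul_coord_of_mem_affineSpan {ι : Type*} (β : AffineBasis ι k V) {i j m n : ι}
    (him : i ≠ m) (hin : i ≠ n) (hjm : j ≠ m) (hjn : j ≠ n) (hmn : m ≠ n) {x : k}
    (hx : 1 + x ≠ 0) {v : V}
    (hv : v ∈ affineSpan k {β i, β j, AffineMap.lineMap (β m) (β n) (x / (1 + x))}) :
    β.coord n v = x * β.coord m v := by
  have hvanish : ∀ w ∈ ({β i, β j, AffineMap.lineMap (β m) (β n) (x / (1 + x))} : Set V),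
      (β.coord n - x • β.coord m) w = 0 := by
    rintro w (rfl | rfl | rfl)
    · simp [coord_apply_ne, him.symm, hin.symm]
    · simp [coord_apply_ne, hjm.symm, hjn.symm]
    · simp only [AffineMap.apply_lineMap, AffineMap.coe_sub, AffineMap.coe_smul, Pi.sub_apply,
        Pi.smul_apply, smul_eq_mul, coord_apply_eq, β.coord_apply_ne hmn, β.coord_apply_ne hmn.symm,
        AffineMap.lineMap_apply_ring']
      field_simp
      ring
  have := (β.coord n - x • β.coord m).apply_eq_of_mem_affineSpan hvanish hv
  simpa [sub_eq_zero] using this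

section

variable {n : ℕ} (β : AffineBasis (Fin (n + 1)) k V)

noncomputable def basisOfZero : Basis (Fin n) k V :=
  (β.basisOf 0).reindex (finSuccAboveEquiv 0).symm

theorem basisOfZero_apply (i : Fin n) : β.basisOfZero i = β i.succ - β 0 := by
  simp [basisOfZero, vsub_eq_sub, finSuccAboveEquiv_apply]

theorem basisOfZero_repr (v : V) (i : Fin n) :
    β.basisOfZero.repr (v - β 0) i = β.coord i.succ v := by
  have : v - β 0 = ∑ i : Fin n, β.coord i.succ v • β.basisOfZero i := calc
    v - β 0 = ∑ i, β.coord i v • β i - (∑ i, β.coord i v) • β 0 := by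
      rw [β.sum_coord_apply_eq_one, one_smul, β.linear_combination_coord_eq_self]
    _ = ∑ i, β.coord i v • (β i - β 0) := by
      simp_rw [Finset.sum_smul, ← Finset.sum_sub_distrib, smul_sub]
    _ = ∑ i : Fin n, β.coord i.succ v • β.basisOfZero i := by
      simp [Fin.sum_univ_succ, basisOfZero_apply]
  rw [this, Basis.repr_sum_self]

theorem exists_affineMap_toMatrix_linear (p : Fin (n + 1) → V) :
    ∃ f : V →ᵃ[k] V, (∀ i, f (β i) = p i) ∧
      LinearMap.toMatrix β.basisOfZero β.basisOfZero f.linear =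
        Matrix.of fun i j => β.toMatrix p j.succ i.succ - β.toMatrix p 0 i.succ := by
  let g := β.basisOfZero.constr k fun i => p i.succ - p 0
  refine ⟨AffineMap.mk' (fun v => g (v - β 0) + p 0) g (β 0) fun v => by simp, ?_, ?_⟩
  · intro i
    cases i using Fin.cases with
    | zero => simp
    | succ i =>
      show g (β i.succ - β 0) + p 0 = p i.succ
      simp [← basisOfZero_apply, g]
  · ext i j
    rw [LinearMap.toMatrix_apply]
    simp only [AffineMap.mk'_linear, g, Basis.constr_basis]
    rw [show p j.succ - p 0 = (p j.succ - β 0) - (p 0 - β 0) by abel, map_sub,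
      Finsupp.sub_apply, basisOfZero_repr, basisOfZero_repr]
    simp [toMatrix_apply]

end

noncomputable def cevianPlane (β : AffineBasis (Fin 4) k V) (i : Fin 4) (x : k) :
    AffineSubspace k V :=
  affineSpan k {β i, β (i + 1), AffineMap.lineMap (β (i + 2)) (β (i + 3)) (x / (1 + x))}

theorem coord_add_three_eq_mul_of_mem_cevianPlane (β : AffineBasis (Fin 4) k V) {i : Fin 4}
    {x : k} (hx : 1 + x ≠ 0) {v : V} (hv : v ∈ β.cevianPlane i x) :
    β.coord (i + 3) v = x * β.coord (i + 2) v := by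
  have hdistinct : ∀ i : Fin 4,
      i ≠ i + 2 ∧ i ≠ i + 3 ∧ i + 1 ≠ i + 2 ∧ i + 1 ≠ i + 3 ∧ i + 2 ≠ i + 3 := by
    decide
  obtain ⟨h₀₂, h₀₃, h₁₂, h₁₃, h₂₃⟩ := hdistinct i
  exact β.coord_eq_mul_coord_of_mem_affineSpan h₀₂ h₀₃ h₁₂ h₁₃ h₂₃ hx hv

theorem toMatrix_eq_routhMatrix [LinearOrder k] [IsStrictOrderedRing k]
    (β : AffineBasis (Fin 4) k V) {x y z t : k} (hx : 0 < x) (hy : 0 < y) (hz : 0 < z)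
    (ht : 0 < t) {P Q R S : V}
    (hP : P ∈ β.cevianPlane 0 x ∧ P ∈ β.cevianPlane 2 z ∧ P ∈ β.cevianPlane 3 t)
    (hQ : Q ∈ β.cevianPlane 0 x ∧ Q ∈ β.cevianPlane 1 y ∧ Q ∈ β.cevianPlane 3 t)
    (hR : R ∈ β.cevianPlane 0 x ∧ R ∈ β.cevianPlane 1 y ∧ R ∈ β.cevianPlane 2 z)
    (hS : S ∈ β.cevianPlane 1 y ∧ S ∈ β.cevianPlane 2 z ∧ S ∈ β.cevianPlane 3 t) :
    β.toMatrix ![P, Q, R, S] = Matrix.of fun i j =>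
      ![(1 + z + z * t + z * t * x)⁻¹, (1 + t + t * x + t * x * y)⁻¹,
        (1 + x + x * y + x * y * z)⁻¹, (1 + y + y * z + y * z * t)⁻¹] i *
        routhMatrix x y z t i j := by
  have hsum v : β.coord 0 v + β.coord 1 v + β.coord 2 v + β.coord 3 v = 1 := by
    rw [← Fin.sum_univ_four (f := fun i => β.coord i v)]; exact β.sum_coord_apply_eq_one v
  have h₀ {v} (hv : v ∈ β.cevianPlane 0 x) : β.coord 3 v = x * β.coord 2 v :=
    β.coord_add_three_eq_mul_of_mem_cevianPlane (i := 0) (by positivity) hv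
  have h₁ {v} (hv : v ∈ β.cevianPlane 1 y) : β.coord 0 v = y * β.coord 3 v :=
    β.coord_add_three_eq_mul_of_mem_cevianPlane (i := 1) (by positivity) hv
  have h₂ {v} (hv : v ∈ β.cevianPlane 2 z) : β.coord 1 v = z * β.coord 0 v :=
    β.coord_add_three_eq_mul_of_mem_cevianPlane (i := 2) (by positivity) hv
  have h₃ {v} (hv : v ∈ β.cevianPlane 3 t) : β.coord 2 v = t * β.coord 1 v :=
    β.coord_add_three_eq_mul_of_mem_cevianPlane (i := 3) (by positivity) hv
  have hP := weights_eq_of_consecutive_ratios (hsum P) (h₂ hP.2.1) (h₃ hP.2.2) (h₀ hP.1)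
    (inv_mul_cancel₀ (by positivity))
  have hQ := weights_eq_of_consecutive_ratios (by linarith [hsum Q]) (h₃ hQ.2.2) (h₀ hQ.1)
    (h₁ hQ.2.1) (inv_mul_cancel₀ (by positivity))
  have hR := weights_eq_of_consecutive_ratios (by linarith [hsum R]) (h₀ hR.1) (h₁ hR.2.1)
    (h₂ hR.2.2) (inv_mul_cancel₀ (by positivity))
  have hS := weights_eq_of_consecutive_ratios (by linarith [hsum S]) (h₁ hS.1) (h₂ hS.2.1)
    (h₃ hS.2.2) (inv_mul_cancel₀ (by positivity))
  ext i j
  fin_cases i <;> fin_cases j <;> simp [toMatrix_apply, routhMatrix, hP, hQ, hR, hS]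

end AffineBasis

theorem tetVol_eq_abs_det_toMatrix_mul (β : AffineBasis (Fin 4) ℝ (EuclideanSpace ℝ (Fin 3)))
    (p : Fin 4 → EuclideanSpace ℝ (Fin 3)) :
    tetVol (p 0) (p 1) (p 2) (p 3) = |(β.toMatrix p).det| * tetVol (β 0) (β 1) (β 2) (β 3) := by
  obtain ⟨f, hf, hmat⟩ := β.exists_affineMap_toMatrix_linear p
  simp only [← hf]
  rw [tetVol_map, ← LinearMap.det_toMatrix β.basisOfZero, hmat,
    Matrix.det_fin_four_eq_det_sub_row_zero _ (β.toMatrix_row_sum_one p)]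

theorem routh_tetrahedron_PQRS_general
    (A B C D M N K L P Q R S : EuclideanSpace ℝ (Fin 3)) (x y z t : ℝ)
    (hABCD : AffineIndependent ℝ ![A, B, C, D])
    (hvol : tetVol A B C D = 1)
    (hx : 0 < x) (hy : 0 < y) (hz : 0 < z) (ht : 0 < t)
    (hM : M ∈ segment ℝ A B)
    (hN : N ∈ segment ℝ B C)
    (hK : K ∈ segment ℝ C D)
    (hL : L ∈ segment ℝ D A)
    (hxr : dist C K / dist K D = x)
    (hyr : dist D L / dist L A = y)
    (hzr : dist A M / dist M B = z)
    (htr : dist B N / dist N C = t)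
    (hP : P ∈ affineSpan ℝ {A, B, K} ∧ P ∈ affineSpan ℝ {C, D, M} ∧
          P ∈ affineSpan ℝ {D, A, N})
    (hQ : Q ∈ affineSpan ℝ {A, B, K} ∧ Q ∈ affineSpan ℝ {B, C, L} ∧
          Q ∈ affineSpan ℝ {D, A, N})
    (hR : R ∈ affineSpan ℝ {A, B, K} ∧ R ∈ affineSpan ℝ {B, C, L} ∧
          R ∈ affineSpan ℝ {C, D, M})
    (hS : S ∈ affineSpan ℝ {B, C, L} ∧ S ∈ affineSpan ℝ {C, D, M} ∧
          S ∈ affineSpan ℝ {D, A, N}) :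
    tetVol P Q R S =
      |1 - x * y * z * t| ^ 3 /
        ((1 + x + x * y + x * y * z) * (1 + y + y * z + y * z * t) *
          (1 + z + z * t + z * t * x) * (1 + t + t * x + t * x * y)) := by
  let β : AffineBasis (Fin 4) ℝ (EuclideanSpace ℝ (Fin 3)) :=
    ⟨![A, B, C, D], hABCD, hABCD.affineSpan_eq_top_iff_card_eq_finrank_add_one.mpr (by simp)⟩
  obtain rfl := eq_lineMap_of_mem_segment_of_dist_div_dist hK hx hxr
  obtain rfl := eq_lineMap_of_mem_segment_of_dist_div_dist hL hy hyr
  obtain rfl := eq_lineMap_of_mem_segment_of_dist_div_dist hM hz hzr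
  obtain rfl := eq_lineMap_of_mem_segment_of_dist_div_dist hN ht htr
  calc tetVol P Q R S = |(β.toMatrix ![P, Q, R, S]).det| * tetVol A B C D :=
        tetVol_eq_abs_det_toMatrix_mul β ![P, Q, R, S]
    _ = _ := by
      rw [β.toMatrix_eq_routhMatrix hx hy hz ht hP hQ hR hS, Matrix.det_mul_column,
        det_routhMatrix, hvol, Fin.prod_univ_four]
      simp only [Matrix.cons_val]
      rw [abs_mul, abs_pow, abs_of_pos (by positivity)]
      field_simp

theorem routh_tetrahedron_PQRS
    (A B C D M N K L P Q R S : EuclideanSpace ℝ (Fin 3)) (x y z t : ℝ)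
    (hABCD : AffineIndependent ℝ ![A, B, C, D])
    (hvol : tetVol A B C D = 1)
    (hx : 0 < x) (hy : 0 < y) (hz : 0 < z) (ht : 0 < t)
    (hxyzt : x * y * z * t ≠ 1)
    (hM : M ∈ segment ℝ A B) (hMA : M ≠ A) (hMB : M ≠ B)
    (hN : N ∈ segment ℝ B C) (hNB : N ≠ B) (hNC : N ≠ C)
    (hK : K ∈ segment ℝ C D) (hKC : K ≠ C) (hKD : K ≠ D)
    (hL : L ∈ segment ℝ D A) (hLD : L ≠ D) (hLA : L ≠ A)
    (hxr : dist C K / dist K D = x)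
    (hyr : dist D L / dist L A = y)
    (hzr : dist A M / dist M B = z)
    (htr : dist B N / dist N C = t)
    (hP : P ∈ affineSpan ℝ {A, B, K} ∧ P ∈ affineSpan ℝ {C, D, M} ∧
          P ∈ affineSpan ℝ {D, A, N})
    (hQ : Q ∈ affineSpan ℝ {A, B, K} ∧ Q ∈ affineSpan ℝ {B, C, L} ∧
          Q ∈ affineSpan ℝ {D, A, N})
    (hR : R ∈ affineSpan ℝ {A, B, K} ∧ R ∈ affineSpan ℝ {B, C, L} ∧
          R ∈ affineSpan ℝ {C, D, M})
    (hS : S ∈ affineSpan ℝ {B, C, L} ∧ S ∈ affineSpan ℝ {C, D, M} ∧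
          S ∈ affineSpan ℝ {D, A, N}) :
    tetVol P Q R S =
      |1 - x * y * z * t| ^ 3 /
        ((1 + x + x * y + x * y * z) * (1 + y + y * z + y * z * t) *
          (1 + z + z * t + z * t * x) * (1 + t + t * x + t * x * y)) :=
  routh_tetrahedron_PQRS_general A B C D M N K L P Q R S x y z t hABCD hvol hx hy hz ht hM hN hK hL
    hxr hyr hzr htr hP hQ hR hS
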